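/- arXiv:2206.03284 — 3 statements merged into one kernel-verified Lean document; each statement's English description precedes it below -/
import Mathlib

section
/- For the controlled SIRS system with initial data (S(0), I(0), R(0)) = (s, i, r) ∈ (0,1)³ and any measurable control u with values in [0, Ū], the trajectories satisfy S(t) > 0, I(t) > 0 and R(t) > 0 for all t ≥ 0. -/
open Set MeasureTheory intervalIntegral

/-- If `X` is positive on `[0, τ)` and continuous on `Ici 0`, then `X τ ≥ 0`. -/
lemma sirs_nonneg_of_pos_left (X : ℝ → ℝ) (τ : ℝ) (hτ : 0 < τ)
    (hXc : ContinuousOn X (Ici 0))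
    (hpos : ∀ q, 0 ≤ q → q < τ → 0 < X q) : 0 ≤ X τ := by
  have hcl : τ ∈ closure (Ico (0:ℝ) τ) := by
    rw [closure_Ico hτ.ne]
    exact ⟨hτ.le, le_rfl⟩
  haveI : (nhdsWithin τ (Ico (0:ℝ) τ)).NeBot := mem_closure_iff_nhdsWithin_neBot.1 hcl
  have h1 : Filter.Tendsto X (nhdsWithin τ (Ico (0:ℝ) τ)) (nhds (X τ)) :=
    (hXc τ hτ.le).mono (fun q hq => hq.1)
  refine ge_of_tendsto h1 ?_
  filter_upwards [self_mem_nhdsWithin] with q hq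
  exact (hpos q hq.1 hq.2).le

/-- Bounded a.e.-measurable functions are interval integrable. -/
lemma sirs_integrable_aux {g : ℝ → ℝ} {a b K : ℝ} (hab : a ≤ b)
    (hg : AEMeasurable g (volume.restrict (Ioc a b)))
    (hK : ∀ q ∈ Ioc a b, |g q| ≤ K) : IntervalIntegrable g volume a b := by
  rw [intervalIntegrable_iff_integrableOn_Ioc_of_le hab]
  refine Integrable.mono' (integrable_const K) hg.aestronglyMeasurable ?_
  refine (ae_restrict_iff' measurableSet_Ioc).2 (Filter.Eventually.of_forall fun q hq => ?_)
  simpa [Real.norm_eq_abs] using hK q hq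

/-- The key quantitative lemma: a continuous function which is positive on `[0, τ)`,
vanishes at `τ`, and satisfies an integral equation whose integrand is bounded below
by `-C • X`, cannot exist. -/
lemma sirs_first_zero_absurd (C τ : ℝ) (hC : 0 < C) (hτ : 0 < τ)
    (X f : ℝ → ℝ)
    (hXc : ContinuousOn X (Icc 0 τ))
    (hpos : ∀ q, 0 ≤ q → q < τ → 0 < X q)
    (hXτ : X τ = 0)
    (hii : ∀ a, a ∈ Icc 0 τ → IntervalIntegrable f volume a τ)
    (heq : ∀ a, a ∈ Icc 0 τ → X τ - X a = ∫ q in a..τ, f q)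
    (hbd : ∀ q, q ∈ Icc 0 τ → -C * X q ≤ f q) : False := by
  set t'' := max 0 (τ - 1 / (2 * C)) with ht''def
  have hCC : 0 < 1 / (2 * C) := by positivity
  have ht''0 : 0 ≤ t'' := le_max_left _ _
  have ht''τ : t'' < τ := max_lt hτ (by linarith)
  obtain ⟨p, hp, hpmin⟩ := isCompact_Icc.exists_isMinOn (nonempty_Icc.2 ht''0)
    (hXc.mono (Icc_subset_Icc le_rfl ht''τ.le))
  have hXp : 0 < X p := hpos p hp.1 (lt_of_le_of_lt hp.2 ht''τ)
  set δ := X p / 2 with hδdef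
  have hδpos : 0 < δ := by positivity
  have hδp : δ < X p := by simp [hδdef]; linarith
  set A := {q ∈ Icc 0 τ | δ ≤ X q} with hAdef
  have hA_sub : A ⊆ Icc 0 τ := fun q hq => hq.1
  have hA_closed : IsClosed A := hXc.preimage_isClosed_of_isClosed isClosed_Icc isClosed_Ici
  have hA_cpt : IsCompact A := isCompact_Icc.of_isClosed_subset hA_closed hA_sub
  have hA_ne : A.Nonempty := ⟨0, ⟨le_rfl, hτ.le⟩, (hδp.le.trans (hpmin ⟨le_rfl, ht''0⟩))⟩
  set t₁ := sSup A with ht₁def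
  have ht₁A : t₁ ∈ A := hA_cpt.sSup_mem hA_ne
  have hub : ∀ q, q ∈ Icc (0:ℝ) τ → δ ≤ X q → q ≤ t₁ :=
    fun q hq h => le_csSup hA_cpt.bddAbove ⟨hq, h⟩
  have ht''le : t'' ≤ t₁ := hub t'' ⟨ht''0, ht''τ.le⟩ (hδp.le.trans (hpmin ⟨ht''0, le_rfl⟩))
  have ht₁τ : t₁ < τ := lt_of_le_of_ne ht₁A.1.2 (by
    intro h
    have := ht₁A.2
    rw [h, hXτ] at this
    linarith)
  -- X t₁ = δ by IVT and maximality
  have hIVT : δ ∈ Icc (X τ) (X t₁) := ⟨by rw [hXτ]; exact hδpos.le, ht₁A.2⟩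
  obtain ⟨t₂, ht₂, hXt₂⟩ := intermediate_value_Icc' ht₁τ.le
    (hXc.mono (Icc_subset_Icc ht₁A.1.1 le_rfl)) hIVT
  have ht₂t₁ : t₂ = t₁ :=
    le_antisymm (hub t₂ ⟨ht₁A.1.1.trans ht₂.1, ht₂.2⟩ hXt₂.ge) ht₂.1
  have hXt₁ : X t₁ = δ := by rw [← ht₂t₁]; exact hXt₂
  have hsmall : ∀ q, q ∈ Icc t₁ τ → X q ≤ δ := by
    intro q hq
    by_contra h
    push_neg at h
    have h1 : q ≤ t₁ := hub q ⟨ht₁A.1.1.trans hq.1, hq.2⟩ h.le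
    have h2 : q = t₁ := le_antisymm h1 hq.1
    rw [h2, hXt₁] at h
    exact lt_irrefl δ h
  -- integral estimate
  have hXnn : ∀ q, q ∈ Icc (0:ℝ) τ → 0 ≤ X q := by
    intro q hq
    rcases lt_or_eq_of_le hq.2 with h | h
    · exact (hpos q hq.1 h).le
    · rw [h, hXτ]
  have hptwise : ∀ q ∈ Icc t₁ τ, -C * δ ≤ f q := by
    intro q hq
    have hq' : q ∈ Icc (0:ℝ) τ := ⟨ht₁A.1.1.trans hq.1, hq.2⟩
    have h1 := hbd q hq'
    have h2 : -C * δ ≤ -C * X q := by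
      have := hsmall q hq
      nlinarith
    linarith
  have hmono : ∫ q in t₁..τ, (-C * δ) ≤ ∫ q in t₁..τ, f q :=
    intervalIntegral.integral_mono_on ht₁τ.le intervalIntegrable_const
      (hii t₁ ⟨ht₁A.1.1, ht₁τ.le⟩) hptwise
  rw [intervalIntegral.integral_const] at hmono
  have heq1 := heq t₁ ⟨ht₁A.1.1, ht₁τ.le⟩
  have hlen : τ - t₁ ≤ 1 / (2 * C) := by
    have : τ - 1 / (2 * C) ≤ t'' := le_max_right _ _
    linarith
  have hlen0 : 0 ≤ τ - t₁ := by linarith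
  have hfinal : (τ - t₁) • (-C * δ) ≥ -(δ / 2) := by
    have h3 : -C * δ ≤ 0 := by nlinarith
    have : (τ - t₁) * (-C * δ) ≥ (1 / (2 * C)) * (-C * δ) := by nlinarith
    have h4 : (1 / (2 * C)) * (-C * δ) = -(δ / 2) := by field_simp
    rw [smul_eq_mul]
    linarith [h4 ▸ this]
  rw [hXτ, hXt₁] at heq1
  -- 0 - δ = ∫ f ≥ (τ - t₁) • (-Cδ) ≥ -δ/2
  have : (0:ℝ) - δ ≥ -(δ / 2) := by
    rw [heq1]
    calc ∫ q in t₁..τ, f q ≥ (τ - t₁) • (-C * δ) := hmono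
      _ ≥ -(δ / 2) := hfinal
  linarith

/-- For the controlled SIRS system with initial data in `(0,1)³` and any
measurable control `u` with values in `[0, Ū]`, the trajectories remain
strictly positive for all times. -/
theorem sirs_positivity
    (β γ η Ubar : ℝ) (hβ : 0 < β) (hγ : 0 < γ) (hη : 0 < η) (hU : 0 < Ubar)
    (u : ℝ → ℝ) (hu_meas : Measurable u) (hu_range : ∀ t, u t ∈ Icc 0 Ubar)
    (S I R : ℝ → ℝ)
    (s i r : ℝ) (hs : s ∈ Ioo (0:ℝ) 1) (hi : i ∈ Ioo (0:ℝ) 1)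
    (hr : r ∈ Ioo (0:ℝ) 1)
    (hS0 : S 0 = s) (hI0 : I 0 = i) (hR0 : R 0 = r)
    (hSc : ContinuousOn S (Ici 0)) (hIc : ContinuousOn I (Ici 0))
    (hRc : ContinuousOn R (Ici 0))
    (hS : ∀ t, 0 ≤ t →
      S t = S 0 + ∫ q in (0:ℝ)..t, (-β * S q * I q - u q * S q + η * R q))
    (hI : ∀ t, 0 ≤ t →
      I t = I 0 + ∫ q in (0:ℝ)..t, (β * S q * I q - γ * I q))
    (hR : ∀ t, 0 ≤ t →
      R t = R 0 + ∫ q in (0:ℝ)..t, (γ * I q - η * R q + u q * S q)) :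
    ∀ t, 0 ≤ t → 0 < S t ∧ 0 < I t ∧ 0 < R t := by
  intro t ht
  by_contra hcon
  -- the bad set
  set B := {q ∈ Icc (0:ℝ) t | S q ≤ 0 ∨ I q ≤ 0 ∨ R q ≤ 0} with hBdef
  have htB : t ∈ B := by
    refine ⟨⟨ht, le_rfl⟩, ?_⟩
    by_contra h
    push_neg at h
    exact hcon ⟨h.1, h.2.1, h.2.2⟩
  have hBne : B.Nonempty := ⟨t, htB⟩
  have hIccsub : Icc (0:ℝ) t ⊆ Ici 0 := fun q hq => hq.1
  have hB_closed : IsClosed B := by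
    have h1 : B = (Icc (0:ℝ) t ∩ S ⁻¹' Iic 0) ∪
        ((Icc (0:ℝ) t ∩ I ⁻¹' Iic 0) ∪ (Icc (0:ℝ) t ∩ R ⁻¹' Iic 0)) := by
      ext q
      simp only [hBdef, mem_setOf_eq, mem_union, mem_inter_iff, mem_preimage, mem_Iic]
      tauto
    rw [h1]
    exact (((hSc.mono hIccsub).preimage_isClosed_of_isClosed isClosed_Icc isClosed_Iic).union
      (((hIc.mono hIccsub).preimage_isClosed_of_isClosed isClosed_Icc isClosed_Iic).union
      ((hRc.mono hIccsub).preimage_isClosed_of_isClosed isClosed_Icc isClosed_Iic)))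
  have hB_cpt : IsCompact B := isCompact_Icc.of_isClosed_subset hB_closed (fun q hq => hq.1)
  set τ := sInf B with hτdef
  have hτB : τ ∈ B := hB_cpt.sInf_mem hBne
  have hτ0 : 0 ≤ τ := hτB.1.1
  have hτt : τ ≤ t := hτB.1.2
  have hτpos : 0 < τ := by
    rcases lt_or_eq_of_le hτ0 with h | h
    · exact h
    · exfalso
      rcases hτB.2 with h1 | h1 | h1 <;> rw [← h, hS0, hI0, hR0] at * <;>
        [exact absurd h1 (not_le.2 hs.1); exact absurd h1 (not_le.2 hi.1);
         exact absurd h1 (not_le.2 hr.1)]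
  have hpos : ∀ q, 0 ≤ q → q < τ → 0 < S q ∧ 0 < I q ∧ 0 < R q := by
    intro q hq hqτ
    have hqB : q ∉ B := fun hqB => absurd (csInf_le hB_cpt.bddBelow hqB) (not_le.2 hqτ)
    have hqIcc : q ∈ Icc (0:ℝ) t := ⟨hq, hqτ.le.trans hτt⟩
    have hnot : ¬(S q ≤ 0 ∨ I q ≤ 0 ∨ R q ≤ 0) := fun h => hqB ⟨hqIcc, h⟩
    push_neg at hnot
    exact ⟨hnot.1, hnot.2.1, hnot.2.2⟩
  -- nonnegativity on [0, τ]
  have hSτnn : 0 ≤ S τ := sirs_nonneg_of_pos_left S τ hτpos hSc (fun q h1 h2 => (hpos q h1 h2).1)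
  have hIτnn : 0 ≤ I τ := sirs_nonneg_of_pos_left I τ hτpos hIc (fun q h1 h2 => (hpos q h1 h2).2.1)
  have hRτnn : 0 ≤ R τ := sirs_nonneg_of_pos_left R τ hτpos hRc (fun q h1 h2 => (hpos q h1 h2).2.2)
  have hnn : ∀ q, q ∈ Icc (0:ℝ) τ → 0 ≤ S q ∧ 0 ≤ I q ∧ 0 ≤ R q := by
    intro q hq
    rcases lt_or_eq_of_le hq.2 with h | h
    · obtain ⟨a, b, c⟩ := hpos q hq.1 h
      exact ⟨a.le, b.le, c.le⟩
    · rw [h]; exact ⟨hSτnn, hIτnn, hRτnn⟩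
  -- bounds on [0, τ]
  have hτIci : Icc (0:ℝ) τ ⊆ Ici 0 := fun q hq => hq.1
  obtain ⟨KS, hKS⟩ := isCompact_Icc.exists_bound_of_continuousOn (hSc.mono hτIci)
  obtain ⟨KI, hKI⟩ := isCompact_Icc.exists_bound_of_continuousOn (hIc.mono hτIci)
  obtain ⟨KR, hKR⟩ := isCompact_Icc.exists_bound_of_continuousOn (hRc.mono hτIci)
  simp only [Real.norm_eq_abs] at hKS hKI hKR
  have h0Icc : (0:ℝ) ∈ Icc (0:ℝ) τ := ⟨le_rfl, hτpos.le⟩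
  have hKS0 : 0 ≤ KS := (abs_nonneg _).trans (hKS 0 h0Icc)
  have hKI0 : 0 ≤ KI := (abs_nonneg _).trans (hKI 0 h0Icc)
  have hKR0 : 0 ≤ KR := (abs_nonneg _).trans (hKR 0 h0Icc)
  -- measurability on subintervals
  have hmeas : ∀ a, a ∈ Icc (0:ℝ) τ → ∀ b, b ∈ Icc (0:ℝ) τ →
      AEMeasurable S (volume.restrict (Ioc a b)) ∧
      AEMeasurable I (volume.restrict (Ioc a b)) ∧
      AEMeasurable R (volume.restrict (Ioc a b)) := by
    intro a ha b _
    have hsub : Ioc a b ⊆ Ici (0:ℝ) := fun q hq => ha.1.trans hq.1.le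
    exact ⟨(hSc.mono hsub).aemeasurable measurableSet_Ioc,
      (hIc.mono hsub).aemeasurable measurableSet_Ioc,
      (hRc.mono hsub).aemeasurable measurableSet_Ioc⟩
  have habs : ∀ q, q ∈ Icc (0:ℝ) τ →
      |S q| ≤ KS ∧ |I q| ≤ KI ∧ |R q| ≤ KR ∧ 0 ≤ u q ∧ u q ≤ Ubar :=
    fun q hq => ⟨hKS q hq, hKI q hq, hKR q hq, (hu_range q).1, (hu_range q).2⟩
  -- interval integrability of the three integrands on subintervals [a,b] ⊆ [0,τ]
  have hiiS : ∀ a, a ∈ Icc (0:ℝ) τ → ∀ b, b ∈ Icc (0:ℝ) τ → a ≤ b →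
      IntervalIntegrable (fun q => -β * S q * I q - u q * S q + η * R q) volume a b := by
    intro a ha b hb hab
    obtain ⟨hmS, hmI, hmR⟩ := hmeas a ha b hb
    refine sirs_integrable_aux hab
      ((((aemeasurable_const.mul hmS).mul hmI).sub (hu_meas.aemeasurable.mul hmS)).add
        (aemeasurable_const.mul hmR)) (K := β * KS * KI + Ubar * KS + η * KR) ?_
    intro q hq
    have hq' : q ∈ Icc (0:ℝ) τ := ⟨ha.1.trans hq.1.le, hq.2.trans hb.2⟩
    obtain ⟨h1, h2, h3, h4, h5⟩ := habs q hq'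
    have e1 : |(-β) * S q * I q| ≤ β * KS * KI := by
      rw [abs_mul, abs_mul, abs_neg, abs_of_pos hβ]
      exact mul_le_mul (mul_le_mul le_rfl h1 (abs_nonneg _) hβ.le) h2 (abs_nonneg _)
        (by positivity)
    have e2 : |u q * S q| ≤ Ubar * KS := by
      rw [abs_mul]
      exact mul_le_mul (by rw [abs_of_nonneg h4]; exact h5) h1 (abs_nonneg _) hU.le
    have e3 : |η * R q| ≤ η * KR := by
      rw [abs_mul, abs_of_pos hη]
      exact mul_le_mul le_rfl h3 (abs_nonneg _) hη.le
    calc |(-β) * S q * I q - u q * S q + η * R q|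
        ≤ |(-β) * S q * I q - u q * S q| + |η * R q| := abs_add_le _ _
      _ ≤ |(-β) * S q * I q| + |u q * S q| + |η * R q| := by
          linarith [abs_sub ((-β) * S q * I q) (u q * S q)]
      _ ≤ β * KS * KI + Ubar * KS + η * KR := by linarith
  have hiiI : ∀ a, a ∈ Icc (0:ℝ) τ → ∀ b, b ∈ Icc (0:ℝ) τ → a ≤ b →
      IntervalIntegrable (fun q => β * S q * I q - γ * I q) volume a b := by
    intro a ha b hb hab
    obtain ⟨hmS, hmI, _⟩ := hmeas a ha b hb
    refine sirs_integrable_aux hab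
      (((aemeasurable_const.mul hmS).mul hmI).sub (aemeasurable_const.mul hmI))
      (K := β * KS * KI + γ * KI) ?_
    intro q hq
    have hq' : q ∈ Icc (0:ℝ) τ := ⟨ha.1.trans hq.1.le, hq.2.trans hb.2⟩
    obtain ⟨h1, h2, _, _, _⟩ := habs q hq'
    have e1 : |β * S q * I q| ≤ β * KS * KI := by
      rw [abs_mul, abs_mul, abs_of_pos hβ]
      exact mul_le_mul (mul_le_mul le_rfl h1 (abs_nonneg _) hβ.le) h2 (abs_nonneg _)
        (by positivity)
    have e2 : |γ * I q| ≤ γ * KI := by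
      rw [abs_mul, abs_of_pos hγ]
      exact mul_le_mul le_rfl h2 (abs_nonneg _) hγ.le
    calc |β * S q * I q - γ * I q| ≤ |β * S q * I q| + |γ * I q| := abs_sub _ _
      _ ≤ β * KS * KI + γ * KI := by linarith
  have hiiR : ∀ a, a ∈ Icc (0:ℝ) τ → ∀ b, b ∈ Icc (0:ℝ) τ → a ≤ b →
      IntervalIntegrable (fun q => γ * I q - η * R q + u q * S q) volume a b := by
    intro a ha b hb hab
    obtain ⟨hmS, hmI, hmR⟩ := hmeas a ha b hb
    refine sirs_integrable_aux hab
      (((aemeasurable_const.mul hmI).sub (aemeasurable_const.mul hmR)).add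
        (hu_meas.aemeasurable.mul hmS)) (K := γ * KI + η * KR + Ubar * KS) ?_
    intro q hq
    have hq' : q ∈ Icc (0:ℝ) τ := ⟨ha.1.trans hq.1.le, hq.2.trans hb.2⟩
    obtain ⟨h1, h2, h3, h4, h5⟩ := habs q hq'
    have e1 : |γ * I q| ≤ γ * KI := by
      rw [abs_mul, abs_of_pos hγ]
      exact mul_le_mul le_rfl h2 (abs_nonneg _) hγ.le
    have e2 : |η * R q| ≤ η * KR := by
      rw [abs_mul, abs_of_pos hη]
      exact mul_le_mul le_rfl h3 (abs_nonneg _) hη.le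
    have e3 : |u q * S q| ≤ Ubar * KS := by
      rw [abs_mul]
      exact mul_le_mul (by rw [abs_of_nonneg h4]; exact h5) h1 (abs_nonneg _) hU.le
    calc |γ * I q - η * R q + u q * S q|
        ≤ |γ * I q - η * R q| + |u q * S q| := abs_add_le _ _
      _ ≤ |γ * I q| + |η * R q| + |u q * S q| := by linarith [abs_sub (γ * I q) (η * R q)]
      _ ≤ γ * KI + η * KR + Ubar * KS := by linarith
  have hτIcc : τ ∈ Icc (0:ℝ) τ := ⟨hτ0, le_rfl⟩
  -- apply the key lemma to whichever component vanishes at τ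
  rcases hτB.2 with hz | hz | hz
  · -- S τ = 0
    have hzτ : S τ = 0 := le_antisymm hz hSτnn
    refine sirs_first_zero_absurd (β * KI + Ubar) τ (by positivity) hτpos S
      (fun q => -β * S q * I q - u q * S q + η * R q)
      (hSc.mono hτIci) (fun q h1 h2 => (hpos q h1 h2).1) hzτ
      (fun a ha => hiiS a ha τ hτIcc ha.2) ?_ ?_
    · intro a ha
      have h1 := hS τ hτ0
      have h2 := hS a ha.1
      have h3 := intervalIntegral.integral_interval_sub_left (hiiS 0 h0Icc τ hτIcc hτpos.le)
        (hiiS 0 h0Icc a ha ha.1)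
      rw [h1, h2, ← h3]
      ring
    · intro q hq
      obtain ⟨hSq, hIq, hRq⟩ := hnn q hq
      have hIqK : I q ≤ KI := (le_abs_self _).trans (hKI q hq)
      have hu1 := (hu_range q).1
      have hu2 := (hu_range q).2
      show -(β * KI + Ubar) * S q ≤ -β * S q * I q - u q * S q + η * R q
      nlinarith [mul_nonneg hβ.le (mul_nonneg hSq (sub_nonneg.2 hIqK)),
        mul_nonneg hSq (sub_nonneg.2 hu2), mul_nonneg hη.le hRq]
  · -- I τ = 0
    have hzτ : I τ = 0 := le_antisymm hz hIτnn
    refine sirs_first_zero_absurd γ τ hγ hτpos I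
      (fun q => β * S q * I q - γ * I q)
      (hIc.mono hτIci) (fun q h1 h2 => (hpos q h1 h2).2.1) hzτ
      (fun a ha => hiiI a ha τ hτIcc ha.2) ?_ ?_
    · intro a ha
      have h1 := hI τ hτ0
      have h2 := hI a ha.1
      have h3 := intervalIntegral.integral_interval_sub_left (hiiI 0 h0Icc τ hτIcc hτpos.le)
        (hiiI 0 h0Icc a ha ha.1)
      rw [h1, h2, ← h3]
      ring
    · intro q hq
      obtain ⟨hSq, hIq, _⟩ := hnn q hq
      show -γ * I q ≤ β * S q * I q - γ * I q
      nlinarith [mul_nonneg (mul_nonneg hβ.le hSq) hIq]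
  · -- R τ = 0
    have hzτ : R τ = 0 := le_antisymm hz hRτnn
    refine sirs_first_zero_absurd η τ hη hτpos R
      (fun q => γ * I q - η * R q + u q * S q)
      (hRc.mono hτIci) (fun q h1 h2 => (hpos q h1 h2).2.2) hzτ
      (fun a ha => hiiR a ha τ hτIcc ha.2) ?_ ?_
    · intro a ha
      have h1 := hR τ hτ0
      have h2 := hR a ha.1
      have h3 := intervalIntegral.integral_interval_sub_left (hiiR 0 h0Icc τ hτIcc hτpos.le)
        (hiiR 0 h0Icc a ha ha.1)
      rw [h1, h2, ← h3]
      ring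
    · intro q hq
      obtain ⟨hSq, hIq, hRq⟩ := hnn q hq
      show -η * R q ≤ γ * I q - η * R q + u q * S q
      nlinarith [mul_nonneg hγ.le hIq, mul_nonneg (hu_range q).1 hSq]
end

section
/- Let v : 𝒪 → ℝ be locally Lipschitz on an open set 𝒪 ⊆ ℝ², let X : [0,T] → 𝒪 be Lipschitz, let t ∈ (0,T) be a point where t ↦ v(X(t)) is differentiable and where lim_{h→0⁺}(X(t) - X(t-h))/h = b for some b ∈ ℝ². Then for every p ∈ D⁺v(X(t)) (the superdifferential of v at X(t)), one has d/dt [e^{-rt} v(X(t))] ≥ e^{-rt}(⟨p, b⟩ - r·v(X(t))). -/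
/-!
Testing the superdifferential inequality at `X t` against the points `X (t - h)`, dividing
by `h > 0` and letting `h → 0⁺` gives `⟨p, b⟩ ≤ (v ∘ X)'(t)`; the discount factor then only
enters through the product rule, since `e^{-rt} > 0`.
-/

open Set Filter Metric

open scoped Topology

section

variable {E : Type*} [NormedAddCommGroup E] [NormedSpace ℝ E]

def HasSuperdiffWithinAt (f : E → ℝ) (ℓ : E →L[ℝ] ℝ) (s : Set E) (x : E) : Prop :=
  ∀ ε > 0, ∃ δ > 0, ∀ y ∈ s, ‖y - x‖ < δ → f y - f x - ℓ (y - x) ≤ ε * ‖y - x‖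

theorem tendsto_sub_of_tendsto_inv_smul_sub {γ : ℝ → E} {t : ℝ} {b : E}
    (hγ : Tendsto (fun h => h⁻¹ • (γ t - γ (t - h))) (𝓝[>] 0) (𝓝 b)) :
    Tendsto (fun h => γ (t - h)) (𝓝[>] 0) (𝓝 (γ t)) := by
  have hsmul := (tendsto_nhdsWithin_of_tendsto_nhds tendsto_id).smul hγ
  rw [zero_smul] at hsmul
  have hdiff : Tendsto (fun h => γ t - γ (t - h)) (𝓝[>] 0) (𝓝 0) :=
    hsmul.congr' <| eventually_nhdsWithin_of_forall fun h (hh : 0 < h) =>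
      smul_inv_smul₀ hh.ne' _
  simpa using (tendsto_const_nhds (x := γ t)).sub hdiff

theorem HasSuperdiffWithinAt.apply_le_of_tendsto_left {f : E → ℝ} {ℓ : E →L[ℝ] ℝ} {s : Set E}
    {γ : ℝ → E} {t d : ℝ} {b : E} (hf : HasSuperdiffWithinAt f ℓ s (γ t))
    (hγs : ∀ᶠ h in 𝓝[>] 0, γ (t - h) ∈ s)
    (hγ : Tendsto (fun h => h⁻¹ • (γ t - γ (t - h))) (𝓝[>] 0) (𝓝 b))
    (hd : Tendsto (fun h => h⁻¹ * (f (γ t) - f (γ (t - h)))) (𝓝[>] 0) (𝓝 d)) :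
    ℓ b ≤ d := by
  have hbound : ∀ ε > 0, ℓ b - d ≤ ε * ‖b‖ := by
    intro ε hε
    obtain ⟨δ, hδ, hfδ⟩ := hf ε hε
    refine le_of_tendsto_of_tendsto ((ℓ.continuous.tendsto b).comp hγ |>.sub hd)
      ((tendsto_norm.comp hγ).const_mul ε) ?_
    filter_upwards [hγs, (tendsto_sub_of_tendsto_inv_smul_sub hγ).eventually (ball_mem_nhds _ hδ),
      self_mem_nhdsWithin] with h hs hnear (hh : 0 < h)
    have hineq := mul_le_mul_of_nonneg_left (hfδ _ hs (mem_ball_iff_norm.1 hnear))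
      (inv_nonneg.2 hh.le)
    rw [← neg_sub (γ t), map_neg, norm_neg] at hineq
    simp only [Function.comp_apply, map_smul, smul_eq_mul, norm_smul, Real.norm_eq_abs,
      abs_inv, abs_of_pos hh]
    linarith
  have hlim : Tendsto (fun ε : ℝ => ε * ‖b‖) (𝓝[>] 0) (𝓝 0) := by
    simpa using (tendsto_nhdsWithin_of_tendsto_nhds (tendsto_id (x := 𝓝 (0:ℝ)))).mul_const ‖b‖
  exact sub_nonpos.1 (ge_of_tendsto hlim (eventually_nhdsWithin_of_forall hbound))

end

theorem HasDerivAt.tendsto_slope_left {g : ℝ → ℝ} {d t : ℝ} (hg : HasDerivAt g d t) :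
    Tendsto (fun h => h⁻¹ * (g t - g (t - h))) (𝓝[>] 0) (𝓝 d) := by
  have hneg : Tendsto (fun h : ℝ => -h) (𝓝[>] 0) (𝓝[<] 0) := by
    simpa using tendsto_neg_nhdsGT_neg (a := (0 : ℝ))
  refine (hg.tendsto_slope_zero_left.comp hneg).congr fun h => ?_
  simp only [Function.comp_apply, smul_eq_mul, ← sub_eq_add_neg, inv_neg]
  ring

theorem superdifferential_derivative_lower_bound_general
    (O : Set (ℝ × ℝ)) (r : ℝ)
    (v : ℝ × ℝ → ℝ)
    (T : ℝ) (X : ℝ → ℝ × ℝ)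
    (hrange : ∀ τ ∈ Icc (0:ℝ) T, X τ ∈ O)
    (t : ℝ) (ht : t ∈ Ioo (0:ℝ) T)
    (d₀ : ℝ) (hdiff : HasDerivAt (fun τ => v (X τ)) d₀ t)
    (b : ℝ × ℝ)
    (hleft : Tendsto (fun h : ℝ => h⁻¹ • (X t - X (t - h)))
      (nhdsWithin 0 (Ioi 0)) (nhds b))
    (p : ℝ × ℝ)
    (hp : ∀ ε > 0, ∃ δ > 0, ∀ y ∈ O, ‖y - X t‖ < δ →
      v y - v (X t) - (p.1 * (y - X t).1 + p.2 * (y - X t).2) ≤ ε * ‖y - X t‖) :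
    HasDerivAt (fun τ => Real.exp (-r * τ) * v (X τ))
      (Real.exp (-r * t) * (d₀ - r * v (X t))) t ∧
    Real.exp (-r * t) * (d₀ - r * v (X t)) ≥
      Real.exp (-r * t) * ((p.1 * b.1 + p.2 * b.2) - r * v (X t)) := by
  set ℓ : ℝ × ℝ →L[ℝ] ℝ :=
    p.1 • ContinuousLinearMap.fst ℝ ℝ ℝ + p.2 • ContinuousLinearMap.snd ℝ ℝ ℝ
  have hℓ : ∀ z, ℓ z = p.1 * z.1 + p.2 * z.2 := fun z => rfl
  have hsuper : HasSuperdiffWithinAt v ℓ O (X t) := by simpa only [HasSuperdiffWithinAt, hℓ]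
  have hmem : ∀ᶠ h in 𝓝[>] 0, X (t - h) ∈ O := by
    filter_upwards [Ioo_mem_nhdsGT ht.1] with h hh
    exact hrange _ ⟨by linarith [hh.2], by linarith [hh.1, ht.2]⟩
  have hkey : ℓ b ≤ d₀ :=
    hsuper.apply_le_of_tendsto_left hmem hleft hdiff.tendsto_slope_left
  have hexp : HasDerivAt (fun τ => Real.exp (-r * τ)) (Real.exp (-r * t) * -r) t := by
    simpa using ((hasDerivAt_id t).const_mul (-r)).exp
  refine ⟨(hexp.mul hdiff).congr_deriv (by ring), ?_⟩
  rw [← hℓ]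
  exact mul_le_mul_of_nonneg_left (by linarith) (Real.exp_pos _).le

/-- Along a Lipschitz trajectory, at a point of differentiability of
`t ↦ v(X(t))` where the left difference quotients of `X` converge to `b`,
one has `d/dt[e^{-rt} v(X(t))] ≥ e^{-rt}(⟨p, b⟩ - r v(X(t)))` for every `p` in
the superdifferential of `v` at `X(t)`. -/
theorem superdifferential_derivative_lower_bound
    (O : Set (ℝ × ℝ)) (hO : IsOpen O) (r : ℝ) (hr : 0 ≤ r)
    (v : ℝ × ℝ → ℝ)
    (hv : ∀ x ∈ O, ∃ ε > 0, ∃ L : NNReal, LipschitzOnWith L v (ball x ε ∩ O))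
    (T : ℝ) (hT : 0 < T) (X : ℝ → ℝ × ℝ) (LX : NNReal)
    (hX : LipschitzOnWith LX X (Icc 0 T))
    (hrange : ∀ τ ∈ Icc (0:ℝ) T, X τ ∈ O)
    (t : ℝ) (ht : t ∈ Ioo (0:ℝ) T)
    (d₀ : ℝ) (hdiff : HasDerivAt (fun τ => v (X τ)) d₀ t)
    (b : ℝ × ℝ)
    (hleft : Tendsto (fun h : ℝ => h⁻¹ • (X t - X (t - h)))
      (nhdsWithin 0 (Ioi 0)) (nhds b))
    (p : ℝ × ℝ)
    (hp : ∀ ε > 0, ∃ δ > 0, ∀ y ∈ O, ‖y - X t‖ < δ →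
      v y - v (X t) - (p.1 * (y - X t).1 + p.2 * (y - X t).2) ≤ ε * ‖y - X t‖) :
    HasDerivAt (fun τ => Real.exp (-r * τ) * v (X τ))
      (Real.exp (-r * t) * (d₀ - r * v (X t))) t ∧
    Real.exp (-r * t) * (d₀ - r * v (X t)) ≥
      Real.exp (-r * t) * ((p.1 * b.1 + p.2 * b.2) - r * v (X t)) :=
  superdifferential_derivative_lower_bound_general O r v T X hrange t ht d₀ hdiff b hleft p hp
end

section
/- Let a, b, Ū > 0 and let v : ℳ → ℝ be semiconcave. Define Ũ(s,i) = min(max(∂⁺ₛv(s,i)/(bs), 0), Ū), where ∂⁺ₛv denotes the right directional derivative of v in the s-direction. Then, in the sense of distributions, s·∂Ũ/∂s ≤ (1/b)·∂/∂s(∂⁺ₛv), and since v is semiconcave its second distributional derivative in s is bounded above; hence (s·∂Ũ/∂s)⁺ ∈ L^∞(ℳ). -/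
/-!
On each slice `i = const`, semiconcavity makes `s ↦ ∂⁺ₛv(s,i) - 2Ks` antitone, so
`∂⁺ₛv` grows by at most `2K (s₂ - s₁)` between `s₁ ≤ s₂`. The clamp `t ↦ min (max t 0) Ū` is
1-Lipschitz, and when `Ũ` increases the value at `s₂` is positive, so dividing it by the larger
`b s₂` instead of `b s₁` only helps; hence `s₁ (Ũ(s₂,i) - Ũ(s₁,i)) ≤ (2K/b) (s₂ - s₁)`.
-/

open Set Filter Topology

theorem hasDerivWithinAt_Ioi_iff_tendsto_slope_zero_right {f : ℝ → ℝ} {f' x : ℝ} :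
    HasDerivWithinAt f f' (Ioi x) x ↔
      Tendsto (fun t => (f (x + t) - f x) / t) (𝓝[>] 0) (𝓝 f') := by
  have : 𝓝[>] x = map (x + ·) (𝓝[>] 0) := by simp
  rw [hasDerivWithinAt_iff_tendsto_slope, sdiff_singleton_eq_self self_notMem_Ioi, this,
    tendsto_map'_iff]
  simp [Function.comp_def, slope_def_field]

theorem ConcaveOn.antitoneOn_of_hasDerivWithinAt_Ioi {S : Set ℝ} {f f' : ℝ → ℝ}
    (hf : ConcaveOn ℝ S f) (hS : IsOpen S)
    (hf' : ∀ x ∈ S, HasDerivWithinAt f (f' x) (Ioi x) x) : AntitoneOn f' S := by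
  intro x hx y hy hxy
  have h := hf.neg.monotoneOn_rightDeriv (by rwa [hS.interior_eq]) (by rwa [hS.interior_eq]) hxy
  simpa only [(hf' x hx).neg.derivWithin (uniqueDiffWithinAt_Ioi x),
    (hf' y hy).neg.derivWithin (uniqueDiffWithinAt_Ioi y), neg_le_neg_iff] using h

theorem rightDeriv_le_of_concaveOn_sub_sq {S : Set ℝ} {f f' : ℝ → ℝ} {K x y : ℝ}
    (hf : ConcaveOn ℝ S (fun s => f s - K * s ^ 2)) (hS : IsOpen S)
    (hf' : ∀ x ∈ S, HasDerivWithinAt f (f' x) (Ioi x) x) (hx : x ∈ S) (hy : y ∈ S)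
    (hxy : x ≤ y) : f' y ≤ f' x + 2 * K * (y - x) := by
  have hsq (s : ℝ) : HasDerivAt (fun s => K * s ^ 2) (2 * K * s) s := by
    simpa [mul_comm, mul_left_comm, mul_assoc] using (hasDerivAt_pow 2 s).const_mul K
  have h := hf.antitoneOn_of_hasDerivWithinAt_Ioi (f' := fun s => f' s - 2 * K * s) hS
    (fun s hs => (hf' s hs).sub (hsq s).hasDerivWithinAt) hx hy hxy
  linarith

theorem clamp_sub_clamp_le_of_lt {x y U : ℝ} (h : min (max x 0) U < min (max y 0) U) :
    0 < y ∧ min (max y 0) U - min (max x 0) U ≤ y - x := by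
  grind

theorem mul_clamp_div_sub_clamp_div_le {b C s₁ s₂ W₁ W₂ U : ℝ} (hb : 0 < b) (hs₁ : 0 < s₁)
    (hs : s₁ ≤ s₂) (hC : 0 ≤ C) (hW : W₂ ≤ W₁ + C) :
    s₁ * (min (max (W₂ / (b * s₂)) 0) U - min (max (W₁ / (b * s₁)) 0) U) ≤ C / b := by
  rcases le_or_gt (min (max (W₂ / (b * s₂)) 0) U) (min (max (W₁ / (b * s₁)) 0) U)
    with hle | hlt
  · exact (mul_nonpos_of_nonneg_of_nonpos hs₁.le (sub_nonpos.2 hle)).trans (by positivity)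
  obtain ⟨hpos, hdiff⟩ := clamp_sub_clamp_le_of_lt hlt
  have hs₂ : 0 < s₂ := hs₁.trans_le hs
  have hW₂ : 0 < W₂ := (div_pos_iff_of_pos_right (by positivity)).1 hpos
  calc s₁ * (min (max (W₂ / (b * s₂)) 0) U - min (max (W₁ / (b * s₁)) 0) U)
      ≤ s₁ * (W₂ / (b * s₂) - W₁ / (b * s₁)) := mul_le_mul_of_nonneg_left hdiff hs₁.le
    _ = (s₁ / s₂ * W₂ - W₁) / b := by field_simp
    _ ≤ (W₂ - W₁) / b := by
        gcongr
        exact mul_le_of_le_one_left hW₂.le ((div_le_one hs₂).2 hs)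
    _ ≤ C / b := by gcongr; linarith

theorem feedback_weighted_derivative_bounded_general
    (b Ubar K : ℝ) (hb : 0 < b) (hK : 0 ≤ K)
    (Mset : Set (ℝ × ℝ))
    (hMset : Mset = {x : ℝ × ℝ | x.1 ∈ Ioo (0:ℝ) 1 ∧ x.2 ∈ Ioo (0:ℝ) 1 ∧
      x.1 + x.2 < 1})
    (v : ℝ × ℝ → ℝ)
    -- semiconcavity in `s` with constant `K`: `s ↦ v(s,i) - K s²` is concave on slices
    (hsc : ∀ i : ℝ, ConcaveOn ℝ {s : ℝ | (s, i) ∈ Mset}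
      (fun s => v (s, i) - K * s^2))
    -- `w` is the right partial derivative `∂⁺ₛv`
    (w : ℝ × ℝ → ℝ)
    (hw : ∀ x ∈ Mset, Tendsto (fun h : ℝ => (v (x.1 + h, x.2) - v x) / h)
      (nhdsWithin 0 (Ioi 0)) (nhds (w x))) :
    let Utilde : ℝ × ℝ → ℝ := fun x => min (max (w x / (b * x.1)) 0) Ubar
    ∃ M₀ : ℝ, 0 ≤ M₀ ∧ ∀ (i s₁ s₂ : ℝ), (s₁, i) ∈ Mset → (s₂, i) ∈ Mset →
      s₁ ≤ s₂ →
      s₁ * (Utilde (s₂, i) - Utilde (s₁, i)) ≤ M₀ * (s₂ - s₁) := by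
  intro Utilde
  refine ⟨2 * K / b, by positivity, fun i s₁ s₂ h₁ h₂ hs => ?_⟩
  have hMopen : IsOpen Mset := by
    rw [hMset]
    exact (isOpen_Ioo.preimage continuous_fst).inter <|
      (isOpen_Ioo.preimage continuous_snd).inter <|
        isOpen_lt (continuous_fst.add continuous_snd) continuous_const
  have hw_le : w (s₂, i) ≤ w (s₁, i) + 2 * K * (s₂ - s₁) :=
    rightDeriv_le_of_concaveOn_sub_sq (f := fun s => v (s, i)) (f' := fun s => w (s, i))
      (hsc i) (hMopen.preimage (by fun_prop))
      (fun s hs => hasDerivWithinAt_Ioi_iff_tendsto_slope_zero_right.2 (hw _ hs)) h₁ h₂ hs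
  have hs₁ : 0 < s₁ := by
    rw [hMset] at h₁
    exact h₁.1.1
  calc s₁ * (Utilde (s₂, i) - Utilde (s₁, i)) ≤ 2 * K * (s₂ - s₁) / b :=
        mul_clamp_div_sub_clamp_div_le hb hs₁ hs
          (mul_nonneg (by positivity) (sub_nonneg.2 hs)) (by linarith)
    _ = 2 * K / b * (s₂ - s₁) := by ring

/-- For the quadratic-cost feedback `Ũ(s,i) = clamp(∂⁺ₛv(s,i)/(bs), [0,Ū])`
built from a semiconcave `v`, the (one-sided, distributional) quantity
`s ∂Ũ/∂s` has essentially bounded positive part: there is `M ≥ 0` with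
`s₁ (Ũ(s₂,i) - Ũ(s₁,i)) ≤ M (s₂ - s₁)` for `s₁ ≤ s₂`. -/
theorem feedback_weighted_derivative_bounded
    (a b Ubar K : ℝ) (ha : 0 < a) (hb : 0 < b) (hU : 0 < Ubar) (hK : 0 ≤ K)
    (Mset : Set (ℝ × ℝ))
    (hMset : Mset = {x : ℝ × ℝ | x.1 ∈ Ioo (0:ℝ) 1 ∧ x.2 ∈ Ioo (0:ℝ) 1 ∧
      x.1 + x.2 < 1})
    (v : ℝ × ℝ → ℝ)
    -- semiconcavity in `s` with constant `K`: `s ↦ v(s,i) - K s²` is concave on slices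
    (hsc : ∀ i : ℝ, ConcaveOn ℝ {s : ℝ | (s, i) ∈ Mset}
      (fun s => v (s, i) - K * s^2))
    -- `w` is the right partial derivative `∂⁺ₛv`
    (w : ℝ × ℝ → ℝ)
    (hw : ∀ x ∈ Mset, Tendsto (fun h : ℝ => (v (x.1 + h, x.2) - v x) / h)
      (nhdsWithin 0 (Ioi 0)) (nhds (w x))) :
    let Utilde : ℝ × ℝ → ℝ := fun x => min (max (w x / (b * x.1)) 0) Ubar
    ∃ M₀ : ℝ, 0 ≤ M₀ ∧ ∀ (i s₁ s₂ : ℝ), (s₁, i) ∈ Mset → (s₂, i) ∈ Mset →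
      s₁ ≤ s₂ →
      s₁ * (Utilde (s₂, i) - Utilde (s₁, i)) ≤ M₀ * (s₂ - s₁) :=
  feedback_weighted_derivative_bounded_general b Ubar K hb hK Mset hMset v hsc w hw
end
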